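/- Let p > q > 0 be reals, n ≥ 2, and A as above. If S ∈ B'_n is a signed permutation matrix such that A^{-1} S A has integer entries, then S satisfies: s_{i,j} = s_{i+1,j+1} for i,j < n; s_{i,n} = −s_{i+1,1} and s_{n,j} = −s_{1,j+1} for i,j < n; and s_{n,n} = s_{1,1}. -/

import Mathlib

/-- The matrix `A` with `q` on the diagonal, `-p` on the subdiagonal,
`p` in the top-right corner (entry `(1,n)`), and `0` elsewhere. -/
def tilingMatrix (p q : ℝ) (n : ℕ) : Matrix (Fin n) (Fin n) ℝ :=
  Matrix.of fun i j =>
    if (i : ℕ) = (j : ℕ) then q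
    else if (i : ℕ) = (j : ℕ) + 1 then -p
    else if (i : ℕ) = 0 ∧ (j : ℕ) = n - 1 then p
    else 0

/-- A signed permutation matrix: all entries in `{0, ±1}`, with exactly one
nonzero entry in each row and each column. -/
def IsSignedPerm {n : ℕ} (S : Matrix (Fin n) (Fin n) ℝ) : Prop :=
  (∀ i j, S i j = 0 ∨ S i j = 1 ∨ S i j = -1) ∧
    (∀ i, ∃! j, S i j ≠ 0) ∧ (∀ j, ∃! i, S i j ≠ 0)

/-!
Write `A = q - p P`, where `P` is the negacyclic shift, so that `P ^ n = -1`. The geometric sum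
`(q - p P) ∑ₖ qⁿ⁻¹⁻ᵏ pᵏ Pᵏ = qⁿ + pⁿ` gives `A⁻¹`; since the powers `P ^ k`, `k < n`, have
disjoint supports, the entries of `A⁻¹` are at most `pⁿ⁻¹ / (pⁿ + qⁿ)` in absolute value. Hence
every entry of the integer matrix `M = A⁻¹ S A` has absolute value at most
`(p + q) pⁿ⁻¹ / (pⁿ + qⁿ) < 2`, so lies in `{0, ±1}`. Entrywise, `S A = A M` reads
`q (M - S) = p (P M - S P)`, and `q < p` leaves no room for a nonzero integer on the right: first
off the support of `S`, then on it, where row and column uniqueness of `S` make both `S P` and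
`P M` vanish. So `M = S` and `S` commutes with `P`, which is the claimed cyclic form.
-/

open Matrix Finset

/-- The matrix of `eⱼ ↦ eⱼ₊₁`, `eₙ₋₁ ↦ -e₀`. -/
def negacyclicShift (R : Type*) [Ring R] (n : ℕ) : Matrix (Fin n) (Fin n) R :=
  of fun i j => if (i : ℕ) = j + 1 then 1 else if (i : ℕ) + n = j + 1 then -1 else 0

section negacyclicShift

variable {R : Type*} [Ring R] {n : ℕ}

theorem negacyclicShift_mul_apply (X : Matrix (Fin n) (Fin n) R) (i j : Fin n) :
    (negacyclicShift R n * X) i j =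
      if h : (i : ℕ) = 0 then -X ⟨n - 1, by omega⟩ j else X ⟨i - 1, by omega⟩ j := by
  rw [mul_apply]
  split_ifs with h
  · rw [Finset.sum_eq_single ⟨n - 1, by omega⟩]
    · simp [negacyclicShift, h]
      omega
    · intro l _ hl
      simp only [negacyclicShift, of_apply, h]
      rw [if_neg (by omega), if_neg (fun h' => hl (Fin.ext (by simp; omega))), zero_mul]
    · simp
  · rw [Finset.sum_eq_single ⟨i - 1, by omega⟩]
    · simp [negacyclicShift]
      omega
    · intro l _ hl
      simp only [negacyclicShift, of_apply]
      rw [if_neg (fun h' => hl (Fin.ext (by simp; omega))), if_neg (by omega), zero_mul]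
    · simp

theorem mul_negacyclicShift_apply (X : Matrix (Fin n) (Fin n) R) (i j : Fin n) :
    (X * negacyclicShift R n) i j =
      if h : (j : ℕ) + 1 < n then X i ⟨j + 1, h⟩ else -X i ⟨0, by omega⟩ := by
  rw [mul_apply]
  split_ifs with h
  · rw [Finset.sum_eq_single ⟨j + 1, h⟩]
    · simp [negacyclicShift]
    · intro l _ hl
      simp only [negacyclicShift, of_apply]
      rw [if_neg (fun h' => hl (Fin.ext (by simp; omega))), if_neg (by omega), mul_zero]
    · simp
  · rw [Finset.sum_eq_single ⟨0, by omega⟩]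
    · simp [negacyclicShift]
      omega
    · intro l _ hl
      simp only [negacyclicShift, of_apply]
      rw [if_neg (by omega), if_neg (fun h' => hl (Fin.ext (by simp; omega))), mul_zero]
    · simp

theorem exists_ne_negacyclicShift_mul_apply (hn : 2 ≤ n) (X : Matrix (Fin n) (Fin n) R)
    (i j : Fin n) :
    ∃ i' ≠ i, (negacyclicShift R n * X) i j = X i' j ∨
      (negacyclicShift R n * X) i j = -X i' j := by
  rw [negacyclicShift_mul_apply]
  split_ifs with h
  · exact ⟨_, fun h' => by simp only [Fin.ext_iff] at h'; omega, Or.inr rfl⟩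
  · exact ⟨_, fun h' => by simp only [Fin.ext_iff] at h'; omega, Or.inl rfl⟩

theorem exists_ne_mul_negacyclicShift_apply (hn : 2 ≤ n) (X : Matrix (Fin n) (Fin n) R)
    (i j : Fin n) :
    ∃ j' ≠ j, (X * negacyclicShift R n) i j = X i j' ∨
      (X * negacyclicShift R n) i j = -X i j' := by
  rw [mul_negacyclicShift_apply]
  split_ifs with h
  · exact ⟨_, fun h' => by simp only [Fin.ext_iff] at h'; omega, Or.inl rfl⟩
  · exact ⟨_, fun h' => by simp only [Fin.ext_iff] at h'; omega, Or.inr rfl⟩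

theorem negacyclicShift_pow_apply {k : ℕ} (hk : k ≤ n) (i j : Fin n) :
    (negacyclicShift R n ^ k) i j =
      if (i : ℕ) = j + k then 1 else if (i : ℕ) + n = j + k then -1 else 0 := by
  induction k generalizing j with
  | zero =>
    simp only [pow_zero, one_apply, Fin.ext_iff, add_zero]
    split_ifs <;> first | rfl | omega
  | succ k ih =>
    rw [pow_succ, mul_negacyclicShift_apply]
    by_cases h : (j : ℕ) + 1 < n
    · rw [dif_pos h, ih (by omega), Fin.val_mk, add_assoc, Nat.add_comm 1 k]
    · rw [dif_neg h, ih (by omega), Fin.val_mk, zero_add]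
      split_ifs <;> first | omega | simp

theorem negacyclicShift_pow_self : negacyclicShift R n ^ n = -1 := by
  ext i j
  rw [negacyclicShift_pow_apply le_rfl, if_neg (by omega), neg_apply, one_apply]
  simp only [add_left_inj, ← Fin.ext_iff]
  split_ifs <;> simp

theorem negacyclicShift_mul_apply_eq_zero (hn : 2 ≤ n) {X : Matrix (Fin n) (Fin n) R}
    {i j : Fin n} (hX : ∀ i' ≠ i, X i' j = 0) : (negacyclicShift R n * X) i j = 0 := by
  obtain ⟨i', hi', h | h⟩ := exists_ne_negacyclicShift_mul_apply hn X i j <;>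
    simp [h, hX i' hi']

theorem mul_negacyclicShift_apply_eq_zero (hn : 2 ≤ n) {X : Matrix (Fin n) (Fin n) R}
    {i j : Fin n} (hX : ∀ j' ≠ j, X i j' = 0) : (X * negacyclicShift R n) i j = 0 := by
  obtain ⟨j', hj', h | h⟩ := exists_ne_mul_negacyclicShift_apply hn X i j <;>
    simp [h, hX j' hj']

theorem exists_intCast_eq_negacyclicShift_mul_apply {X : Matrix (Fin n) (Fin n) R}
    (hX : ∀ i j, ∃ m : ℤ, X i j = m) (i j : Fin n) :
    ∃ m : ℤ, (negacyclicShift R n * X) i j = m := by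
  rw [negacyclicShift_mul_apply]
  split_ifs
  · obtain ⟨m, hm⟩ := hX ⟨n - 1, by omega⟩ j
    exact ⟨-m, by simp [hm]⟩
  · exact hX _ _

theorem exists_intCast_eq_mul_negacyclicShift_apply {X : Matrix (Fin n) (Fin n) R}
    (hX : ∀ i j, ∃ m : ℤ, X i j = m) (i j : Fin n) :
    ∃ m : ℤ, (X * negacyclicShift R n) i j = m := by
  rw [mul_negacyclicShift_apply]
  split_ifs
  · exact hX _ _
  · obtain ⟨m, hm⟩ := hX i ⟨0, by omega⟩
    exact ⟨-m, by simp [hm]⟩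

end negacyclicShift

theorem abs_mul_negacyclicShift_apply_le {n : ℕ} (hn : 2 ≤ n) {X : Matrix (Fin n) (Fin n) ℝ}
    {C : ℝ} (hX : ∀ i j, |X i j| ≤ C) (i j : Fin n) : |(X * negacyclicShift ℝ n) i j| ≤ C := by
  obtain ⟨j', -, h | h⟩ := exists_ne_mul_negacyclicShift_apply hn X i j <;>
    simpa [h] using hX i j'

theorem abs_sum_smul_negacyclicShift_pow_apply_le {n : ℕ} {a : ℕ → ℝ} {C : ℝ}
    (ha : ∀ k < n, |a k| ≤ C) (i j : Fin n) :
    |(∑ k ∈ range n, a k • negacyclicShift ℝ n ^ k) i j| ≤ C := by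
  have hk₀ : (if (j : ℕ) ≤ i then (i : ℕ) - j else i + n - j) < n := by split_ifs <;> omega
  rw [Matrix.sum_apply, sum_eq_single_of_mem _ (mem_range.2 hk₀)]
  · rw [Matrix.smul_apply, negacyclicShift_pow_apply hk₀.le, smul_eq_mul, abs_mul]
    refine (mul_le_of_le_one_right (abs_nonneg _) ?_).trans (ha _ hk₀)
    split_ifs <;> simp
  · intro k hk hne
    rw [mem_range] at hk
    rw [Matrix.smul_apply, negacyclicShift_pow_apply hk.le,
      if_neg (by split_ifs at hne <;> omega), if_neg (by split_ifs at hne <;> omega), smul_zero]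

namespace IsSignedPerm

variable {n : ℕ} {S : Matrix (Fin n) (Fin n) ℝ}

theorem apply_eq_zero_of_ne_col (hS : IsSignedPerm S) {i j j' : Fin n} (hij : S i j ≠ 0)
    (hj : j' ≠ j) : S i j' = 0 := by
  by_contra h
  exact hj ((hS.2.1 i).unique h hij)

theorem apply_eq_zero_of_ne_row (hS : IsSignedPerm S) {i j i' : Fin n} (hij : S i j ≠ 0)
    (hi : i' ≠ i) : S i' j = 0 := by
  by_contra h
  exact hi ((hS.2.2 j).unique h hij)

theorem abs_apply_le_one (hS : IsSignedPerm S) (i j : Fin n) : |S i j| ≤ 1 := by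
  rcases hS.1 i j with h | h | h <;> simp [h]

theorem exists_intCast_eq (hS : IsSignedPerm S) (i j : Fin n) : ∃ m : ℤ, S i j = m := by
  rcases hS.1 i j with h | h | h
  exacts [⟨0, by simp [h]⟩, ⟨1, by simp [h]⟩, ⟨-1, by simp [h]⟩]

theorem abs_mul_apply_le (hS : IsSignedPerm S) {X : Matrix (Fin n) (Fin n) ℝ} {C : ℝ}
    (hX : ∀ i j, |X i j| ≤ C) (i j : Fin n) : |(X * S) i j| ≤ C := by
  obtain ⟨r, hr, -⟩ := hS.2.2 j
  rw [mul_apply, sum_eq_single r fun l _ hl => by rw [hS.apply_eq_zero_of_ne_row hr hl, mul_zero],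
    abs_mul]
  · exact (mul_le_of_le_one_right (abs_nonneg _) (hS.abs_apply_le_one r j)).trans (hX i r)
  · simp

end IsSignedPerm

theorem abs_le_one_of_intCast {x : ℝ} {m : ℤ} (hx : x = m) (h : |x| < 2) : |x| ≤ 1 := by
  subst hx
  have : |m| < 2 := by exact_mod_cast h
  exact_mod_cast Int.lt_add_one_iff.mp this

theorem int_eq_zero_of_mul_eq_mul_of_abs_le_one {p q x : ℝ} {k : ℤ} (hq : 0 < q) (hqp : q < p)
    (hx : |x| ≤ 1) (h : q * x = p * k) : k = 0 := by
  by_contra hk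
  have hk1 : (1 : ℝ) ≤ |(k : ℝ)| := by exact_mod_cast Int.one_le_abs hk
  have := congrArg abs h
  rw [abs_mul, abs_mul, abs_of_pos hq, abs_of_pos (hq.trans hqp)] at this
  nlinarith [abs_nonneg x]

section tilingMatrix

variable {p q : ℝ} {n : ℕ}

theorem tilingMatrix_eq_sub_negacyclicShift (hn : 2 ≤ n) :
    tilingMatrix p q n = q • 1 - p • negacyclicShift ℝ n := by
  ext i j
  simp only [tilingMatrix, negacyclicShift, of_apply, Matrix.sub_apply, Matrix.smul_apply,
    one_apply, Fin.ext_iff, smul_eq_mul]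
  split_ifs <;> first | omega | ring

theorem tilingMatrix_mul_sum (hn : 2 ≤ n) :
    tilingMatrix p q n * ∑ k ∈ range n, (q ^ (n - 1 - k) * p ^ k) • negacyclicShift ℝ n ^ k =
      (p ^ n + q ^ n) • 1 := by
  have h := ((Commute.one_right (p • negacyclicShift ℝ n)).smul_right q).mul_neg_geom_sum₂ n
  simp only [smul_pow, one_pow, negacyclicShift_pow_self, mul_smul_comm, mul_one,
    smul_smul] at h
  rw [tilingMatrix_eq_sub_negacyclicShift hn, h, smul_neg, sub_neg_eq_add, add_comm, add_smul]

theorem tilingMatrix_mul_smul_sum (hn : 2 ≤ n) (hpq : p ^ n + q ^ n ≠ 0) :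
    tilingMatrix p q n *
      (p ^ n + q ^ n)⁻¹ • ∑ k ∈ range n, (q ^ (n - 1 - k) * p ^ k) • negacyclicShift ℝ n ^ k =
      1 := by
  rw [mul_smul_comm, tilingMatrix_mul_sum hn, smul_smul, inv_mul_cancel₀ hpq, one_smul]

theorem inv_tilingMatrix (hn : 2 ≤ n) (hpq : p ^ n + q ^ n ≠ 0) :
    (tilingMatrix p q n)⁻¹ =
      (p ^ n + q ^ n)⁻¹ • ∑ k ∈ range n, (q ^ (n - 1 - k) * p ^ k) • negacyclicShift ℝ n ^ k :=
  inv_eq_right_inv (tilingMatrix_mul_smul_sum hn hpq)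

theorem abs_inv_tilingMatrix_apply_le (hq : 0 < q) (hqp : q ≤ p) (hn : 2 ≤ n) (i j : Fin n) :
    |(tilingMatrix p q n)⁻¹ i j| ≤ p ^ (n - 1) / (p ^ n + q ^ n) := by
  have hp : 0 < p := hq.trans_le hqp
  have hpq : 0 < p ^ n + q ^ n := by positivity
  rw [inv_tilingMatrix hn hpq.ne', Matrix.smul_apply, smul_eq_mul, abs_mul, abs_inv,
    abs_of_pos hpq, inv_mul_eq_div]
  gcongr
  refine abs_sum_smul_negacyclicShift_pow_apply_le (fun k hk => ?_) i j
  rw [abs_of_nonneg (by positivity)]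
  calc q ^ (n - 1 - k) * p ^ k ≤ p ^ (n - 1 - k) * p ^ k := by gcongr
    _ = p ^ (n - 1) := by rw [← pow_add]; congr 1; omega

theorem abs_mul_tilingMatrix_apply_le (hq : 0 < q) (hqp : q ≤ p) (hn : 2 ≤ n)
    {X : Matrix (Fin n) (Fin n) ℝ} {C : ℝ} (hX : ∀ i j, |X i j| ≤ C) (i j : Fin n) :
    |(X * tilingMatrix p q n) i j| ≤ (q + p) * C := by
  have hp : 0 < p := hq.trans_le hqp
  rw [tilingMatrix_eq_sub_negacyclicShift hn, Matrix.mul_sub, Matrix.mul_smul, Matrix.mul_smul,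
    mul_one, Matrix.sub_apply, Matrix.smul_apply, Matrix.smul_apply, smul_eq_mul, smul_eq_mul,
    add_mul]
  refine (abs_sub _ _).trans (add_le_add ?_ ?_) <;> rw [abs_mul]
  · rw [abs_of_pos hq]; exact mul_le_mul_of_nonneg_left (hX i j) hq.le
  · rw [abs_of_pos hp]
    exact mul_le_mul_of_nonneg_left (abs_mul_negacyclicShift_apply_le hn hX i j) hp.le

theorem abs_inv_tilingMatrix_mul_mul_apply_lt_two (hq : 0 < q) (hqp : q < p) (hn : 2 ≤ n)
    {S : Matrix (Fin n) (Fin n) ℝ} (hS : IsSignedPerm S) (i j : Fin n) :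
    |((tilingMatrix p q n)⁻¹ * S * tilingMatrix p q n) i j| < 2 := by
  have hp : 0 < p := hq.trans hqp
  have hpq : 0 < p ^ n + q ^ n := by positivity
  refine (abs_mul_tilingMatrix_apply_le hq hqp.le hn
    (hS.abs_mul_apply_le (abs_inv_tilingMatrix_apply_le hq hqp.le hn)) i j).trans_lt ?_
  have hpn : p * p ^ (n - 1) = p ^ n := by rw [← pow_succ']; congr 1; omega
  have : q * p ^ (n - 1) < p * p ^ (n - 1) := by gcongr
  rw [mul_div_assoc', div_lt_iff₀ hpq]
  nlinarith [pow_pos hq n]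

theorem negacyclicShift_mul_eq_mul_negacyclicShift (hq : 0 < q) (hqp : q < p) (hn : 2 ≤ n)
    {S M : Matrix (Fin n) (Fin n) ℝ} (hS : IsSignedPerm S) (hMint : ∀ i j, ∃ m : ℤ, M i j = m)
    (hM : ∀ i j, |M i j| ≤ 1)
    (h : S * tilingMatrix p q n = tilingMatrix p q n * M) :
    negacyclicShift ℝ n * S = S * negacyclicShift ℝ n := by
  set P := negacyclicShift ℝ n
  have hE : ∀ i j, q * (M i j - S i j) = p * ((P * M) i j - (S * P) i j) := by
    intro i j
    have := congrFun (congrFun h i) j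
    rw [tilingMatrix_eq_sub_negacyclicShift hn] at this
    simp only [Matrix.mul_sub, Matrix.sub_mul, Matrix.mul_smul, Matrix.smul_mul, mul_one,
      one_mul, Matrix.sub_apply, Matrix.smul_apply, smul_eq_mul] at this
    linarith
  -- off the support of `S`, the integer `(P M - S P) i j` has absolute value at most `q / p < 1`
  have hzero : ∀ i j, S i j = 0 → M i j = 0 ∧ (P * M) i j = (S * P) i j := by
    intro i j hSij
    obtain ⟨a, ha⟩ := exists_intCast_eq_negacyclicShift_mul_apply hMint i j
    obtain ⟨b, hb⟩ := exists_intCast_eq_mul_negacyclicShift_apply hS.exists_intCast_eq i j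
    have hab : a - b = 0 := int_eq_zero_of_mul_eq_mul_of_abs_le_one hq hqp (hM i j) <| by
      rw [Int.cast_sub, ← ha, ← hb, ← hE, hSij, sub_zero]
    have hPM : (P * M) i j = (S * P) i j := by rw [ha, hb, sub_eq_zero.mp hab]
    have := hE i j
    rw [hPM, sub_self, mul_zero, hSij, sub_zero] at this
    exact ⟨(mul_eq_zero.mp this).resolve_left hq.ne', hPM⟩
  have hMS : ∀ i j, M i j = S i j ∧ (P * M) i j = (S * P) i j := by
    intro i j
    by_cases hSij : S i j = 0
    · obtain ⟨hMij, hPM⟩ := hzero i j hSij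
      exact ⟨hMij.trans hSij.symm, hPM⟩
    · have hSP : (S * P) i j = 0 := mul_negacyclicShift_apply_eq_zero hn fun j' hj' =>
        hS.apply_eq_zero_of_ne_col hSij hj'
      have hPM : (P * M) i j = 0 := negacyclicShift_mul_apply_eq_zero hn fun i' hi' =>
        (hzero i' j (hS.apply_eq_zero_of_ne_row hSij hi')).1
      have := hE i j
      rw [hSP, hPM, sub_self, mul_zero] at this
      exact ⟨sub_eq_zero.mp ((mul_eq_zero.mp this).resolve_left hq.ne'), hPM.trans hSP.symm⟩
  obtain rfl : M = S := Matrix.ext fun i j => (hMS i j).1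
  exact Matrix.ext fun i j => (hMS i j).2

end tilingMatrix

theorem stabilizer_is_cyclic_form (p q : ℝ) (hq : 0 < q) (hqp : q < p)
    (n : ℕ) (hn : 2 ≤ n) (S : Matrix (Fin n) (Fin n) ℝ) (hS : IsSignedPerm S)
    (hint : ∀ i j, ∃ m : ℤ, ((tilingMatrix p q n)⁻¹ * S * tilingMatrix p q n) i j = (m : ℝ)) :
    (∀ i j : Fin n, ∀ hi : (i : ℕ) + 1 < n, ∀ hj : (j : ℕ) + 1 < n,
        S i j = S ⟨(i : ℕ) + 1, hi⟩ ⟨(j : ℕ) + 1, hj⟩) ∧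
      (∀ i : Fin n, ∀ hi : (i : ℕ) + 1 < n,
        S i ⟨n - 1, by omega⟩ = -S ⟨(i : ℕ) + 1, hi⟩ ⟨0, by omega⟩) ∧
      (∀ j : Fin n, ∀ hj : (j : ℕ) + 1 < n,
        S ⟨n - 1, by omega⟩ j = -S ⟨0, by omega⟩ ⟨(j : ℕ) + 1, hj⟩) ∧
      S ⟨n - 1, by omega⟩ ⟨n - 1, by omega⟩ = S ⟨0, by omega⟩ ⟨0, by omega⟩ := by
  have hp : 0 < p := hq.trans hqp
  have hpq : p ^ n + q ^ n ≠ 0 := by positivity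
  have hconj : S * tilingMatrix p q n =
      tilingMatrix p q n * ((tilingMatrix p q n)⁻¹ * S * tilingMatrix p q n) := by
    rw [← Matrix.mul_assoc, ← Matrix.mul_assoc, inv_tilingMatrix hn hpq,
      tilingMatrix_mul_smul_sum hn hpq, Matrix.one_mul]
  have hcomm := negacyclicShift_mul_eq_mul_negacyclicShift hq hqp hn hS hint
    (fun i j => abs_le_one_of_intCast (hint i j).choose_spec
      (abs_inv_tilingMatrix_mul_mul_apply_lt_two hq hqp hn hS i j)) hconj
  have hentry (i j : Fin n) := congrFun (congrFun hcomm i) j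
  simp only [negacyclicShift_mul_apply, mul_negacyclicShift_apply] at hentry
  refine ⟨fun i j hi hj => ?_, fun i hi => ?_, fun j hj => ?_, ?_⟩
  · simpa [hj] using hentry ⟨i + 1, hi⟩ j
  · simpa [show ¬n - 1 + 1 < n by omega] using hentry ⟨i + 1, hi⟩ ⟨n - 1, by omega⟩
  · simpa [hj, neg_eq_iff_eq_neg] using hentry ⟨0, by omega⟩ j
  · simpa [show ¬n - 1 + 1 < n by omega] using hentry ⟨0, by omega⟩ ⟨n - 1, by omega⟩
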